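/- arXiv:1003.3436 — 2 statements merged into one kernel-verified Lean document; each statement's English description precedes it below -/
import Mathlib

section
/- The bilinear form ⟨Ψ, Φ⟩ = Re(Ψ† Γ⁰ Φ) on ℍ⁴ is skew-symmetric, and for any 𝒜 ∈ 𝒱 satisfies ⟨𝒜Ψ, 𝒜Φ⟩ = -h(𝒜,𝒜)⟨Ψ, Φ⟩; in particular it is invariant under products of pairs of unit vectors (Spin(6,1)-invariance). -/
open Matrix

/-- The 2×2 hermitian quaternionic matrix `(t+x, y; y*, t-x)`. -/
noncomputable def qherm (t x : ℝ) (y : Quaternion ℝ) : Matrix (Fin 2) (Fin 2) (Quaternion ℝ) :=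
  !![((t + x : ℝ) : Quaternion ℝ), y; star y, ((t - x : ℝ) : Quaternion ℝ)]

/-- Trace reversal `Ã = A - (tr A)·1`. -/
noncomputable def qtilde (M : Matrix (Fin 2) (Fin 2) (Quaternion ℝ)) :
    Matrix (Fin 2) (Fin 2) (Quaternion ℝ) :=
  M - (Matrix.trace M) • (1 : Matrix (Fin 2) (Fin 2) (Quaternion ℝ))

/-- An element `(a·1, Ã; A, -a·1)` of the 7-dimensional Minkowski space
`𝒱 ⊆ ℍ[4]`, where `A = (t+x, y; y*, t-x) ∈ h₂(ℍ)`. -/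
noncomputable def vmat (a t x : ℝ) (y : Quaternion ℝ) :
    Matrix (Fin 2 ⊕ Fin 2) (Fin 2 ⊕ Fin 2) (Quaternion ℝ) :=
  Matrix.fromBlocks (a • 1) (qtilde (qherm t x y)) (qherm t x y) (-(a • 1))

/-- The block matrix `Γ⁰ = (0, -1; 1, 0)`. -/
noncomputable def Gamma0 : Matrix (Fin 2 ⊕ Fin 2) (Fin 2 ⊕ Fin 2) (Quaternion ℝ) :=
  Matrix.fromBlocks 0 (-1) 1 0

/-- The pairing `⟨Ψ, Φ⟩ = Re(Ψ† Γ⁰ Φ)` on `𝒮 = ℍ⁴`. -/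
noncomputable def spinPair (Ψ Φ : Fin 2 ⊕ Fin 2 → Quaternion ℝ) : ℝ :=
  (dotProduct (star ∘ Ψ) (Gamma0 *ᵥ Φ)).re

/-! `Γ⁰` is skew-hermitian, which makes the pairing skew. For `𝒜 = (a·1, Ã; A, -a·1) ∈ 𝒱` the
blocks `A`, `Ã` are hermitian, so `Γ⁰𝒜 = -𝒜ᴴΓ⁰`; and `AÃ = ÃA = -(det A)·1` because `Ã` is `A`
with `t` negated, so `𝒜² = (a² - det A)·1 = h(𝒜,𝒜)·1`. Hence `𝒜ᴴΓ⁰𝒜 = -Γ⁰𝒜² = -h(𝒜,𝒜)Γ⁰`. -/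

instance {R : Type*} [CommRing R] [StarRing R] [TrivialStar R] : StarModule R (Quaternion R) :=
  ⟨fun r a => by rw [Quaternion.star_smul, star_trivial r]⟩

lemma spinPair_def (Ψ Φ : Fin 2 ⊕ Fin 2 → Quaternion ℝ) :
    spinPair Ψ Φ = (star Ψ ⬝ᵥ Gamma0 *ᵥ Φ).re := rfl

lemma conjTranspose_Gamma0 : Gamma0ᴴ = -Gamma0 := by
  rw [Gamma0, fromBlocks_conjTranspose, fromBlocks_neg]
  simp

theorem spinPair_eq_neg_spinPair (Ψ Φ : Fin 2 ⊕ Fin 2 → Quaternion ℝ) :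
    spinPair Ψ Φ = -spinPair Φ Ψ := by
  have h : star (star Ψ ⬝ᵥ Gamma0 *ᵥ Φ) = -(star Φ ⬝ᵥ Gamma0 *ᵥ Ψ) := by
    rw [← star_dotProduct, star_mulVec, ← dotProduct_mulVec, conjTranspose_Gamma0, neg_mulVec,
      dotProduct_neg]
  rw [spinPair_def, spinPair_def, ← Quaternion.re_star, h, Quaternion.re_neg]

theorem spinPair_mulVec_mulVec {M : Matrix (Fin 2 ⊕ Fin 2) (Fin 2 ⊕ Fin 2) (Quaternion ℝ)} {c : ℝ}
    (hM : Mᴴ * Gamma0 * M = c • Gamma0) (Ψ Φ : Fin 2 ⊕ Fin 2 → Quaternion ℝ) :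
    spinPair (M *ᵥ Ψ) (M *ᵥ Φ) = c * spinPair Ψ Φ := by
  rw [spinPair_def, spinPair_def, star_mulVec, ← dotProduct_mulVec, mulVec_mulVec,
    mulVec_mulVec, hM, smul_mulVec, dotProduct_smul, Quaternion.re_smul, smul_eq_mul]

noncomputable def qhermDet (t x : ℝ) (y : Quaternion ℝ) : ℝ :=
  t ^ 2 - x ^ 2 - (y * star y).re

theorem qtilde_qherm (t x : ℝ) (y : Quaternion ℝ) : qtilde (qherm t x y) = qherm (-t) x y := by
  ext i j : 1
  fin_cases i <;> fin_cases j <;> simp [qtilde, qherm, trace_fin_two] <;> abel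

theorem isHermitian_qherm (t x : ℝ) (y : Quaternion ℝ) : (qherm t x y).IsHermitian := by
  ext i j : 1
  fin_cases i <;> fin_cases j <;> simp [qherm]

theorem qherm_mul_qherm_neg (t x : ℝ) (y : Quaternion ℝ) :
    qherm t x y * qherm (-t) x y = (-qhermDet t x y) • 1 := by
  ext i j : 1
  fin_cases i <;> fin_cases j <;> ext <;>
    simp [qherm, qhermDet, Quaternion.re_one, Quaternion.imI_one, Quaternion.imJ_one,
      Quaternion.imK_one, Quaternion.re_zero, Quaternion.imI_zero, Quaternion.imJ_zero,
      Quaternion.imK_zero] <;>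
    ring

theorem qherm_neg_mul_qherm (t x : ℝ) (y : Quaternion ℝ) :
    qherm (-t) x y * qherm t x y = (-qhermDet t x y) • 1 := by
  simpa [qhermDet] using qherm_mul_qherm_neg (-t) x y

theorem vmat_mul_self (a t x : ℝ) (y : Quaternion ℝ) :
    vmat a t x y * vmat a t x y = (a ^ 2 - qhermDet t x y) • 1 := by
  rw [vmat, qtilde_qherm, fromBlocks_multiply, qherm_mul_qherm_neg, qherm_neg_mul_qherm,
    ← fromBlocks_one, fromBlocks_smul]
  congr 1 <;>
    simp only [Matrix.smul_mul, Matrix.mul_smul, Matrix.neg_mul, Matrix.mul_neg, Matrix.one_mul,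
      Matrix.mul_one, smul_zero, smul_smul, neg_smul, smul_neg] <;>
    module

theorem Gamma0_mul_vmat (a t x : ℝ) (y : Quaternion ℝ) :
    Gamma0 * vmat a t x y = -((vmat a t x y)ᴴ * Gamma0) := by
  rw [vmat, qtilde_qherm, Gamma0, fromBlocks_conjTranspose, (isHermitian_qherm _ _ _).eq,
    (isHermitian_qherm _ _ _).eq, conjTranspose_neg, conjTranspose_smul, star_trivial,
    conjTranspose_one, fromBlocks_multiply, fromBlocks_multiply, fromBlocks_neg]
  congr 1 <;> simp

theorem conjTranspose_vmat_mul_Gamma0_mul_vmat (a t x : ℝ) (y : Quaternion ℝ) :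
    (vmat a t x y)ᴴ * Gamma0 * vmat a t x y =
      (-(a ^ 2 - qhermDet t x y)) • Gamma0 := by
  rw [← neg_neg ((vmat a t x y)ᴴ * Gamma0), ← Gamma0_mul_vmat, Matrix.neg_mul, Matrix.mul_assoc,
    vmat_mul_self, Matrix.mul_smul, Matrix.mul_one, neg_smul]

/-- The bilinear form `⟨Ψ, Φ⟩ = Re(Ψ† Γ⁰ Φ)` on `ℍ⁴` is skew-symmetric and satisfies
`⟨𝒜Ψ, 𝒜Φ⟩ = -h(𝒜,𝒜)⟨Ψ, Φ⟩` for every vector `𝒜 ∈ 𝒱`; in particular it is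
invariant under products of pairs of unit vectors (Spin(6,1)-invariance). -/
theorem spinPair_skew_and_invariant :
    (∀ Ψ Φ : Fin 2 ⊕ Fin 2 → Quaternion ℝ, spinPair Ψ Φ = -spinPair Φ Ψ) ∧
    (∀ (a t x : ℝ) (y : Quaternion ℝ) (Ψ Φ : Fin 2 ⊕ Fin 2 → Quaternion ℝ),
      spinPair (vmat a t x y *ᵥ Ψ) (vmat a t x y *ᵥ Φ) =
        -(a ^ 2 + (-(t ^ 2 - x ^ 2 - (y * star y).re))) * spinPair Ψ Φ) := by
  refine ⟨spinPair_eq_neg_spinPair, fun a t x y Ψ Φ => ?_⟩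
  rw [spinPair_mulVec_mulVec (conjTranspose_vmat_mul_Gamma0_mul_vmat a t x y), qhermDet,
    sub_eq_add_neg]
end

section
/- For Ψ = (ψ, φ) ∈ ℍ² ⊕ ℍ² = ℍ⁴, define Ψ·Ψ ∈ 𝒱 as the block matrix with (1,1) entry 2⟨ψ,φ⟩ (where ⟨ψ,φ⟩ = Re(ψ†φ)), (1,2) entry -(ψ·ψ)~ + (φ·φ)~, (2,1) entry -ψ·ψ + φ·φ, and (2,2) entry -2⟨ψ,φ⟩. Then the 4-Ψ's rule holds: Ψ·((Ψ·Ψ)Ψ) = 0, where Ψ·Φ is the symmetric bilinear extension of Ψ·Ψ. -/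
open Matrix

/-- The outer product `ψφ†`. -/
noncomputable def qouter (ψ φ : Fin 2 → Quaternion ℝ) : Matrix (Fin 2) (Fin 2) (Quaternion ℝ) :=
  Matrix.of fun i j => ψ i * star (φ j)

/-- The real pairing `⟨ψ,φ⟩ = Re(ψ†φ)` on `ℍ²`. -/
noncomputable def qpair (ψ φ : Fin 2 → Quaternion ℝ) : ℝ :=
  (∑ i, star (ψ i) * φ i).re

/-- For `Ψ = (ψ, φ) ∈ ℍ² ⊕ ℍ²`, the vector `Ψ·Ψ ∈ 𝒱 ⊂ ℍ[4]`: the block matrix with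
(1,1) entry `2⟨ψ,φ⟩`, (1,2) entry `-(ψ·ψ)~ + (φ·φ)~`, (2,1) entry `-ψ·ψ + φ·φ`, and
(2,2) entry `-2⟨ψ,φ⟩`, where `ψ·ψ = 2(ψψ†)~` on `S₊` and `φ·φ = 2φφ†` on `S₋`. -/
noncomputable def dotSq (ψ φ : Fin 2 → Quaternion ℝ) :
    Matrix (Fin 2 ⊕ Fin 2) (Fin 2 ⊕ Fin 2) (Quaternion ℝ) :=
  Matrix.fromBlocks
    ((2 * qpair ψ φ) • 1)
    (-((2 : ℝ) • qouter ψ ψ) + qtilde ((2 : ℝ) • qouter φ φ))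
    (-((2 : ℝ) • qtilde (qouter ψ ψ)) + (2 : ℝ) • qouter φ φ)
    (-((2 * qpair ψ φ) • 1))

/-- The symmetric bilinear extension `Ψ·Φ` of `Ψ ↦ Ψ·Ψ`, obtained by polarization. -/
noncomputable def dotBil (ψ φ χ θ : Fin 2 → Quaternion ℝ) :
    Matrix (Fin 2 ⊕ Fin 2) (Fin 2 ⊕ Fin 2) (Quaternion ℝ) :=
  ((1 : ℝ) / 2) • (dotSq (ψ + χ) (φ + θ) - dotSq ψ φ - dotSq χ θ)

/-!
Write `s = ψ†φ`, so that `2⟨ψ,φ⟩ = s + s̄` is real, hence central. Since `ψψ†ψ = |ψ|²ψ` and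
`(φφ†)~φ = 0`, the spinor `(Ψ·Ψ)Ψ` collapses to the right multiple `Ψu` by the imaginary
quaternion `u = s̄ - s`. Right multiplication by unit quaternions preserves `Ψ·Ψ`, and its
infinitesimal version kills the polarization: the blocks of `Ψ·(Ψu)` are `Re(s(u + ū))`,
`ψ(u + ū)ψ†` and `φ(u + ū)φ†`, all zero.
-/

open scoped Quaternion

theorem Quaternion.re_mul_comm {R : Type*} [CommRing R] (a b : ℍ[R]) :
    (a * b).re = (b * a).re := by
  simp only [Quaternion.re_mul]
  ring

theorem dotProduct_star_self_eq_coe {n : Type*} [Fintype n] (v : n → ℍ[ℝ]) :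
    star v ⬝ᵥ v = ((∑ i, Quaternion.normSq (v i) : ℝ) : ℍ[ℝ]) := by
  simp only [dotProduct, Pi.star_apply, Quaternion.star_mul_self, ← Quaternion.algebraMap_def,
    map_sum]

theorem qouter_add_left (ψ χ φ : Fin 2 → ℍ[ℝ]) :
    qouter (ψ + χ) φ = qouter ψ φ + qouter χ φ :=
  Matrix.ext fun i j => add_mul (ψ i) (χ i) (star (φ j))

theorem qouter_add_right (ψ φ θ : Fin 2 → ℍ[ℝ]) :
    qouter ψ (φ + θ) = qouter ψ φ + qouter ψ θ := by
  ext1 i j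
  simp only [qouter, of_apply, Pi.add_apply, star_add, mul_add, Matrix.add_apply]

theorem qpair_add_left (ψ χ φ : Fin 2 → ℍ[ℝ]) : qpair (ψ + χ) φ = qpair ψ φ + qpair χ φ := by
  simp only [qpair, Pi.add_apply, star_add, add_mul, Finset.sum_add_distrib, Quaternion.re_add]

theorem qpair_add_right (ψ φ θ : Fin 2 → ℍ[ℝ]) : qpair ψ (φ + θ) = qpair ψ φ + qpair ψ θ := by
  simp only [qpair, Pi.add_apply, mul_add, Finset.sum_add_distrib, Quaternion.re_add]

theorem qtilde_add (M N : Matrix (Fin 2) (Fin 2) ℍ[ℝ]) : qtilde (M + N) = qtilde M + qtilde N := by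
  rw [qtilde, qtilde, qtilde, trace_add, add_smul]
  abel

theorem qtilde_smul (r : ℝ) (M : Matrix (Fin 2) (Fin 2) ℍ[ℝ]) : qtilde (r • M) = r • qtilde M := by
  rw [qtilde, qtilde, trace_smul, smul_sub, smul_assoc]

theorem qtilde_zero : qtilde 0 = 0 := by
  rw [qtilde, trace_zero, zero_smul, sub_zero]

theorem dotBil_eq_fromBlocks (ψ φ χ θ : Fin 2 → ℍ[ℝ]) :
    dotBil ψ φ χ θ =
      fromBlocks ((qpair ψ θ + qpair χ φ) • 1)
        (-(qouter ψ χ + qouter χ ψ) + qtilde (qouter φ θ + qouter θ φ))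
        (-qtilde (qouter ψ χ + qouter χ ψ) + (qouter φ θ + qouter θ φ))
        (-((qpair ψ θ + qpair χ φ) • 1)) := by
  simp only [dotBil, dotSq, sub_eq_add_neg, fromBlocks_neg, fromBlocks_add, fromBlocks_smul,
    qpair_add_left, qpair_add_right, qouter_add_left, qouter_add_right, qtilde_add, qtilde_smul]
  congr 1 <;> module

theorem qouter_mulVec (ψ φ χ : Fin 2 → ℍ[ℝ]) :
    qouter ψ φ *ᵥ χ = fun i => ψ i * (star φ ⬝ᵥ χ) :=
  (vecMulVec_mulVec ψ (star φ) χ).trans rfl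

theorem trace_qouter_self (φ : Fin 2 → ℍ[ℝ]) : trace (qouter φ φ) = star φ ⬝ᵥ φ := by
  simp only [trace, diag, qouter, of_apply, dotProduct, Pi.star_apply, star_comm_self']

theorem qtilde_qouter_self_mulVec (φ : Fin 2 → ℍ[ℝ]) : qtilde (qouter φ φ) *ᵥ φ = 0 := by
  rw [qtilde, sub_mulVec, smul_mulVec, one_mulVec, qouter_mulVec, trace_qouter_self,
    dotProduct_star_self_eq_coe, sub_eq_zero]
  funext i
  exact (Quaternion.coe_commutes (R := ℝ) _ _).symm

theorem coe_two_mul_qpair (ψ φ : Fin 2 → ℍ[ℝ]) :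
    ((2 * qpair ψ φ : ℝ) : ℍ[ℝ]) = star ψ ⬝ᵥ φ + star φ ⬝ᵥ ψ := by
  rw [star_dotProduct φ, Quaternion.self_add_star, qpair, dotProduct]
  push_cast
  rfl

theorem dotSq_mulVec_self (ψ φ : Fin 2 → ℍ[ℝ]) :
    dotSq ψ φ *ᵥ Sum.elim ψ φ =
      Sum.elim (fun i => ψ i * (star φ ⬝ᵥ ψ - star ψ ⬝ᵥ φ))
        (fun i => φ i * (star φ ⬝ᵥ ψ - star ψ ⬝ᵥ φ)) := by
  rw [dotSq, fromBlocks_mulVec]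
  simp only [Sum.elim_comp_inl, Sum.elim_comp_inr, add_mulVec, neg_mulVec, smul_mulVec,
    one_mulVec, qtilde_smul, qtilde_qouter_self_mulVec, qouter_mulVec]
  congr 1 <;> funext i <;>
  · simp only [Pi.add_apply, Pi.neg_apply, Pi.smul_apply, Pi.zero_apply, smul_zero, two_smul,
      ← Quaternion.mul_coe_eq_smul, coe_two_mul_qpair]
    noncomm_ring

theorem qpair_add_qpair_mul_right (ψ φ : Fin 2 → ℍ[ℝ]) {u : ℍ[ℝ]} (hu : star u = -u) :
    qpair ψ (fun i => φ i * u) + qpair (fun i => ψ i * u) φ = 0 := by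
  have hright : ∑ i, star (ψ i) * (φ i * u) = (∑ i, star (ψ i) * φ i) * u := by
    simp only [Finset.sum_mul, mul_assoc]
  have hleft : ∑ i, star (ψ i * u) * φ i = star u * ∑ i, star (ψ i) * φ i := by
    simp only [Finset.mul_sum, star_mul, mul_assoc]
  rw [qpair, qpair, hright, hleft, Quaternion.re_mul_comm (star u), ← Quaternion.re_add, ← mul_add,
    hu, add_neg_cancel, mul_zero, Quaternion.re_zero]

theorem qouter_add_qouter_mul_right (ψ : Fin 2 → ℍ[ℝ]) {u : ℍ[ℝ]} (hu : star u = -u) :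
    qouter ψ (fun i => ψ i * u) + qouter (fun i => ψ i * u) ψ = 0 := by
  ext1 i j
  simp only [qouter, Matrix.add_apply, of_apply, star_mul, hu, Matrix.zero_apply]
  noncomm_ring

theorem dotBil_mul_right_eq_zero (ψ φ : Fin 2 → ℍ[ℝ]) {u : ℍ[ℝ]} (hu : star u = -u) :
    dotBil ψ φ (fun i => ψ i * u) (fun i => φ i * u) = 0 := by
  rw [dotBil_eq_fromBlocks, qpair_add_qpair_mul_right ψ φ hu, qouter_add_qouter_mul_right ψ hu,
    qouter_add_qouter_mul_right φ hu]
  simp only [zero_smul, qtilde_zero, neg_zero, add_zero, fromBlocks_zero]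

/-- The 4-Ψ's rule over ℍ (dimension 7): `Ψ·((Ψ·Ψ)Ψ) = 0` for every spinor
`Ψ = (ψ, φ) ∈ ℍ⁴`. -/
theorem four_psis_rule (ψ φ : Fin 2 → Quaternion ℝ) :
    dotBil ψ φ
      (fun i => (dotSq ψ φ *ᵥ Sum.elim ψ φ) (Sum.inl i))
      (fun i => (dotSq ψ φ *ᵥ Sum.elim ψ φ) (Sum.inr i)) = 0 := by
  rw [dotSq_mulVec_self]
  refine dotBil_mul_right_eq_zero ψ φ ?_
  rw [star_sub, ← star_dotProduct, ← star_dotProduct, neg_sub]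
end
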